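/- Let φ be a substitution with φ(0) a finite binary word starting with digit 0 and φ(1) a finite binary word starting with digit 1, let a ∈ {0,1}^ℕ start with digit 0, let b ∈ {0,1}^ℕ start with digit 1, and let q₀,q₁ > 1. Then 0 ≤ dim_H π_{q₀,q₁}(Ω_{φ(a),φ(b)}) − dim_H π_{q₀,q₁}(Ω_{φ(0^∞),φ(1^∞)}) ≤ dim_H π_{q₀,q₁}(φ(Ω_{a,b})). In particular, if h(Ω_{a,b}) = 0, then dim_H π_{q₀,q₁}(Ω_{φ(a),φ(b)}) = dim_H π_{q₀,q₁}(Ω_{φ(0^∞),φ(1^∞)}). -/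

import Mathlib

open Filter Topology

/-- The base corresponding to a digit: `q0` for digit `0` (`false`), `q1` for digit `1` (`true`). -/
noncomputable def qb (q0 q1 : ℝ) (d : Bool) : ℝ := if d then q1 else q0

/-- `piE q0 q1 i = Σ_{k=1}^∞ i_k / (q_{i_1} ⋯ q_{i_k})`, with 0-based indexing. -/
noncomputable def piE (q0 q1 : ℝ) (i : ℕ → Bool) : ℝ :=
  ∑' k : ℕ, (if i k then (1 : ℝ) else 0) / ∏ j ∈ Finset.range (k + 1), qb q0 q1 (i j)

/-- Strict lexicographic order `≺` on binary sequences. -/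
def lexLt (u v : ℕ → Bool) : Prop := ∃ n : ℕ, (∀ m, m < n → u m = v m) ∧ u n < v n

/-- Non-strict lexicographic order `⪯`. -/
def lexLe (u v : ℕ → Bool) : Prop := lexLt u v ∨ u = v

/-- The tail `i_{n+1} i_{n+2} ⋯` of a sequence (0-based: drop the first `n` entries). -/
def shiftTail (i : ℕ → Bool) (n : ℕ) : ℕ → Bool := fun k => i (n + k)

/-- `Omega a b` : sequences none of whose tails lies in the open lexicographic interval `]a,b[`. -/
def Omega (a b : ℕ → Bool) : Set (ℕ → Bool) :=
  {i | ∀ n : ℕ, ¬ (lexLt a (shiftTail i n) ∧ lexLt (shiftTail i n) b)}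

/-- `(a,b) ∈ W` : `a` starts with digit 0, `b` starts with digit 1, and `a, b ∈ Ω_{a,b}`. -/
def memW (a b : ℕ → Bool) : Prop :=
  a 0 = false ∧ b 0 = true ∧ a ∈ Omega a b ∧ b ∈ Omega a b

/-- The set `L_{a,b,n}` of length-`n` prefixes of elements of `Ω_{a,b}`, as a finset. -/
noncomputable def Lwords (a b : ℕ → Bool) (n : ℕ) : Finset (Fin n → Bool) :=
  Set.Finite.toFinset
    (Set.toFinite {w : Fin n → Bool | ∃ i ∈ Omega a b, ∀ k : Fin n, i k.1 = w k})

/-- Topological entropy `h(Ω_{a,b}) = lim_{n→∞} (1/n) log #L_{a,b,n}`; the limit exists by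
subadditivity, hence it coincides with the `limsup` used here. -/
noncomputable def entropy (a b : ℕ → Bool) : ℝ :=
  Filter.limsup (fun n : ℕ => Real.log ((Lwords a b n).card) / n) Filter.atTop

/-- Cumulative length `|φ(i₁)| + ⋯ + |φ(i_k)|` of the first `k` blocks of the substituted
sequence, where `φ(0) = p0` and `φ(1) = p1`. -/
def blockLen (p0 p1 : List Bool) (x : ℕ → Bool) (k : ℕ) : ℕ :=
  ∑ j ∈ Finset.range k, (if x j then p1 else p0).length

/-- The substitution `φ` (with `φ(0) = p0`, `φ(1) = p1`) applied to a sequence: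
`φ(i₁i₂⋯) = φ(i₁)φ(i₂)⋯`. -/
def substSeq (p0 p1 : List Bool) (x : ℕ → Bool) : ℕ → Bool :=
  fun m =>
    let k := Nat.findGreatest (fun k => blockLen p0 p1 x k ≤ m) m
    (if x k then p1 else p0).getD (m - blockLen p0 p1 x k) false

section LexBasics

lemma bool_lt_iff {x y : Bool} : x < y ↔ x = false ∧ y = true := by
  cases x <;> cases y <;> simp

lemma lexLt_irrefl (u : ℕ → Bool) : ¬ lexLt u u := by
  rintro ⟨n, -, h⟩; exact lt_irrefl _ h

lemma lexLt_trans {u v w : ℕ → Bool} (h1 : lexLt u v) (h2 : lexLt v w) : lexLt u w := by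
  obtain ⟨n1, e1, l1⟩ := h1
  obtain ⟨n2, e2, l2⟩ := h2
  rcases lt_trichotomy n1 n2 with h | h | h
  · exact ⟨n1, fun m hm => (e1 m hm).trans (e2 m (hm.trans h)), (e2 n1 h) ▸ l1⟩
  · subst h
    rw [bool_lt_iff] at l1 l2
    rw [l1.2] at l2; exact absurd l2.1 (by simp)
  · exact ⟨n2, fun m hm => (e1 m (hm.trans h)).trans (e2 m hm), (e1 n2 h).symm ▸ l2⟩

lemma lexLt_asymm {u v : ℕ → Bool} (h1 : lexLt u v) (h2 : lexLt v u) : False :=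
  lexLt_irrefl u (lexLt_trans h1 h2)

lemma lexLe_refl (u : ℕ → Bool) : lexLe u u := Or.inr rfl

lemma lexLe_trans_lt {u v w : ℕ → Bool} (h1 : lexLe u v) (h2 : lexLt v w) : lexLt u w := by
  rcases h1 with h1 | rfl
  · exact lexLt_trans h1 h2
  · exact h2

lemma lexLt_trans_le {u v w : ℕ → Bool} (h1 : lexLt u v) (h2 : lexLe v w) : lexLt u w := by
  rcases h2 with h2 | rfl
  · exact lexLt_trans h1 h2
  · exact h1

lemma lexLe_trans {u v w : ℕ → Bool} (h1 : lexLe u v) (h2 : lexLe v w) : lexLe u w := by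
  rcases h1 with h1 | rfl
  · exact Or.inl (lexLt_trans_le h1 h2)
  · exact h2

lemma lex_total (u v : ℕ → Bool) : lexLt u v ∨ u = v ∨ lexLt v u := by
  by_cases h : u = v
  · exact Or.inr (Or.inl h)
  · have hne : ∃ n, u n ≠ v n := by
      by_contra hc; push_neg at hc; exact h (funext hc)
    classical
    set n := Nat.find hne with hn
    have hspec : u n ≠ v n := Nat.find_spec hne
    have hmin : ∀ m, m < n → u m = v m := fun m hm => by
      have := Nat.find_min hne hm; simpa using this
    rcases lt_or_gt_of_ne hspec with hlt | hgt
    · exact Or.inl ⟨n, hmin, hlt⟩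
    · exact Or.inr (Or.inr ⟨n, fun m hm => (hmin m hm).symm, hgt⟩)

lemma lexLe_of_not_lt {u v : ℕ → Bool} (h : ¬ lexLt u v) : lexLe v u := by
  rcases lex_total u v with h1 | h1 | h1
  · exact absurd h1 h
  · exact Or.inr h1.symm
  · exact Or.inl h1

lemma not_lt_of_lexLe {u v : ℕ → Bool} (h : lexLe u v) : ¬ lexLt v u := by
  intro hc
  rcases h with h | rfl
  · exact lexLt_asymm h hc
  · exact lexLt_irrefl _ hc

lemma lexLe_zero (u : ℕ → Bool) : lexLe (fun _ => false) u := by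
  rcases lex_total (fun _ => false) u with h | h | h
  · exact Or.inl h
  · exact Or.inr h
  · obtain ⟨n, -, hn⟩ := h
    rw [bool_lt_iff] at hn
    exact absurd hn.2 (by simp)

lemma lexLe_one (u : ℕ → Bool) : lexLe u (fun _ => true) := by
  rcases lex_total u (fun _ => true) with h | h | h
  · exact Or.inl h
  · exact Or.inr h
  · obtain ⟨n, -, hn⟩ := h
    rw [bool_lt_iff] at hn
    exact absurd hn.1 (by simp)

lemma shiftTail_shiftTail (i : ℕ → Bool) (n m : ℕ) :
    shiftTail (shiftTail i n) m = shiftTail i (n + m) := by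
  funext k; simp [shiftTail, Nat.add_assoc]

lemma lexLt_shift_iff {u v : ℕ → Bool} {n : ℕ} (h : ∀ m, m < n → u m = v m) :
    lexLt u v ↔ lexLt (shiftTail u n) (shiftTail v n) := by
  constructor
  · rintro ⟨m, hm, hlt⟩
    have hnm : n ≤ m := by
      by_contra hc; push_neg at hc
      rw [h m hc] at hlt; exact lt_irrefl _ hlt
    refine ⟨m - n, fun r hr => ?_, ?_⟩
    · exact hm (n + r) (by omega)
    · show u (n + (m - n)) < v (n + (m - n))
      rwa [Nat.add_sub_cancel' hnm]
  · rintro ⟨m, hm, hlt⟩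
    refine ⟨n + m, fun r hr => ?_, hlt⟩
    by_cases hrn : r < n
    · exact h r hrn
    · have : r = n + (r - n) := by omega
      rw [this]; exact hm (r - n) (by omega)

lemma eq_shift_iff {u v : ℕ → Bool} {n : ℕ} (h : ∀ m, m < n → u m = v m) :
    u = v ↔ shiftTail u n = shiftTail v n := by
  constructor
  · rintro rfl; rfl
  · intro he; funext m
    by_cases hm : m < n
    · exact h m hm
    · have : m = n + (m - n) := by omega
      rw [this]; exact congrFun he (m - n)

lemma lexLe_shift_iff {u v : ℕ → Bool} {n : ℕ} (h : ∀ m, m < n → u m = v m) :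
    lexLe u v ↔ lexLe (shiftTail u n) (shiftTail v n) := by
  unfold lexLe
  rw [lexLt_shift_iff h, eq_shift_iff h]

end LexBasics

section SubstBasics

variable {p0 p1 : List Bool}

lemma blk_pos (h0 : p0 ≠ []) (h1 : p1 ≠ []) (d : Bool) : 0 < (if d then p1 else p0).length := by
  cases d
  · simpa using List.length_pos_iff.2 h0
  · simpa using List.length_pos_iff.2 h1

lemma blockLen_zero (x : ℕ → Bool) : blockLen p0 p1 x 0 = 0 := by simp [blockLen]

lemma blockLen_succ (x : ℕ → Bool) (k : ℕ) :
    blockLen p0 p1 x (k + 1) = blockLen p0 p1 x k + (if x k then p1 else p0).length := by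
  simp [blockLen, Finset.sum_range_succ]

lemma blockLen_mono (x : ℕ → Bool) : Monotone (blockLen p0 p1 x) := by
  intro k l hkl
  exact Finset.sum_le_sum_of_subset (Finset.range_subset_range.2 hkl)

lemma le_blockLen (h0 : p0 ≠ []) (h1 : p1 ≠ []) (x : ℕ → Bool) (k : ℕ) :
    k ≤ blockLen p0 p1 x k := by
  have : ∀ j ∈ Finset.range k, 1 ≤ (if x j then p1 else p0).length :=
    fun j _ => blk_pos h0 h1 (x j)
  calc k = ∑ _j ∈ Finset.range k, 1 := by simp
  _ ≤ _ := Finset.sum_le_sum this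

lemma blockLen_lt_succ (h0 : p0 ≠ []) (h1 : p1 ≠ []) (x : ℕ → Bool) (k : ℕ) :
    blockLen p0 p1 x k < blockLen p0 p1 x (k + 1) := by
  rw [blockLen_succ]
  have : 0 < (if x k then p1 else p0).length := blk_pos h0 h1 (x k)
  omega

lemma blockLen_strictMono (h0 : p0 ≠ []) (h1 : p1 ≠ []) (x : ℕ → Bool) :
    StrictMono (blockLen p0 p1 x) :=
  strictMono_nat_of_lt_succ (blockLen_lt_succ h0 h1 x)

lemma blockLen_agree {x y : ℕ → Bool} {K : ℕ} (h : ∀ j, j < K → x j = y j) {k : ℕ}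
    (hk : k ≤ K) : blockLen p0 p1 x k = blockLen p0 p1 y k := by
  unfold blockLen
  refine Finset.sum_congr rfl fun j hj => ?_
  rw [h j (lt_of_lt_of_le (Finset.mem_range.1 hj) hk)]

lemma blockLen_add (x : ℕ → Bool) (k j : ℕ) :
    blockLen p0 p1 x (k + j) = blockLen p0 p1 x k + blockLen p0 p1 (shiftTail x k) j := by
  induction j with
  | zero => simp [blockLen_zero]
  | succ j ih =>
      rw [← Nat.add_assoc, blockLen_succ, blockLen_succ, ih, shiftTail, Nat.add_assoc]

lemma substSeq_eq_block (h0 : p0 ≠ []) (h1 : p1 ≠ []) (x : ℕ → Bool) {k m : ℕ}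
    (hk1 : blockLen p0 p1 x k ≤ m) (hk2 : m < blockLen p0 p1 x (k + 1)) :
    substSeq p0 p1 x m = (if x k then p1 else p0).getD (m - blockLen p0 p1 x k) false := by
  have hfind : Nat.findGreatest (fun k => blockLen p0 p1 x k ≤ m) m = k := by
    rw [Nat.findGreatest_eq_iff]
    refine ⟨le_trans (le_blockLen h0 h1 x k) hk1, fun _ => hk1, fun n hn _ hP => ?_⟩
    have : blockLen p0 p1 x (k + 1) ≤ blockLen p0 p1 x n := blockLen_mono x hn
    omega
  simp only [substSeq]
  rw [hfind]

lemma exists_block (h0 : p0 ≠ []) (h1 : p1 ≠ []) (x : ℕ → Bool) (m : ℕ) :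
    ∃ k, blockLen p0 p1 x k ≤ m ∧ m < blockLen p0 p1 x (k + 1) := by
  classical
  set P := fun k => blockLen p0 p1 x k ≤ m with hP
  have h0' : P 0 := by simp [hP, blockLen_zero]
  set k := Nat.findGreatest P m with hk
  refine ⟨k, Nat.findGreatest_spec (Nat.zero_le m) h0', ?_⟩
  by_cases hkm : k + 1 ≤ m
  · by_contra hc; push_neg at hc
    exact absurd (Nat.findGreatest_is_greatest (Nat.lt_succ_self k) hkm) (by simpa [hP] using hc)
  · have : m < k + 1 := by omega
    calc m < k + 1 := this
    _ ≤ blockLen p0 p1 x (k + 1) := le_blockLen h0 h1 x (k + 1)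

lemma block_lt_of_lt {x : ℕ → Bool} {k K m : ℕ} (hk1 : blockLen p0 p1 x k ≤ m)
    (hm : m < blockLen p0 p1 x K) : k < K := by
  by_contra hc; push_neg at hc
  exact absurd (le_trans (blockLen_mono x hc) hk1) (by omega)

lemma substSeq_agree {x y : ℕ → Bool} {K : ℕ} (h0 : p0 ≠ []) (h1 : p1 ≠ [])
    (h : ∀ j, j < K → x j = y j) {m : ℕ} (hm : m < blockLen p0 p1 x K) :
    substSeq p0 p1 x m = substSeq p0 p1 y m := by
  obtain ⟨k, hk1, hk2⟩ := exists_block h0 h1 x m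
  have hkK : k < K := block_lt_of_lt hk1 hm
  have e1 : blockLen p0 p1 x k = blockLen p0 p1 y k := blockLen_agree h hkK.le
  have e2 : blockLen p0 p1 x (k + 1) = blockLen p0 p1 y (k + 1) := blockLen_agree h hkK
  rw [substSeq_eq_block h0 h1 x hk1 hk2,
    substSeq_eq_block h0 h1 y (e1 ▸ hk1) (e2 ▸ hk2), h k hkK, e1]

lemma substSeq_shiftTail (h0 : p0 ≠ []) (h1 : p1 ≠ []) (x : ℕ → Bool) (k : ℕ) :
    shiftTail (substSeq p0 p1 x) (blockLen p0 p1 x k) = substSeq p0 p1 (shiftTail x k) := by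
  funext m
  obtain ⟨j, hj1, hj2⟩ := exists_block h0 h1 (shiftTail x k) m
  have l1 : blockLen p0 p1 x (k + j) ≤ blockLen p0 p1 x k + m := by
    rw [blockLen_add]; omega
  have l2 : blockLen p0 p1 x k + m < blockLen p0 p1 x (k + j + 1) := by
    rw [Nat.add_assoc, blockLen_add]; omega
  show substSeq p0 p1 x (blockLen p0 p1 x k + m) = _
  rw [substSeq_eq_block h0 h1 x l1 l2, substSeq_eq_block h0 h1 (shiftTail x k) hj1 hj2]
  have : x (k + j) = shiftTail x k j := rfl
  rw [this, blockLen_add]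
  congr 1
  omega

lemma substSeq_head (h0 : p0 ≠ []) (h1 : p1 ≠ []) (x : ℕ → Bool) {m : ℕ}
    (hm : m < (if x 0 then p1 else p0).length) :
    substSeq p0 p1 x m = (if x 0 then p1 else p0).getD m false := by
  have := substSeq_eq_block h0 h1 x (k := 0) (m := m) (by simp [blockLen_zero])
    (by rw [blockLen_succ, blockLen_zero]; omega)
  simpa [blockLen_zero] using this

end SubstBasics

section Mono

variable {p0 p1 : List Bool}

lemma getD_zero_of_head {l : List Bool} {d : Bool} (h : l.head? = some d) :
    l.getD 0 false = d := by
  cases l with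
  | nil => simp at h
  | cons a t => simp only [List.head?_cons, Option.some.injEq] at h; simp [h]

lemma ne_nil_of_head {l : List Bool} {d : Bool} (h : l.head? = some d) : l ≠ [] := by
  cases l with
  | nil => simp at h
  | cons a t => simp

variable (hp0 : p0.head? = some false) (hp1 : p1.head? = some true)

include hp0 hp1

lemma blk_getD_zero (d : Bool) : (if d then p1 else p0).getD 0 false = d := by
  cases d
  · simpa using getD_zero_of_head hp0
  · simpa using getD_zero_of_head hp1

lemma substSeq_blockStart (x : ℕ → Bool) (k : ℕ) :
    substSeq p0 p1 x (blockLen p0 p1 x k) = x k := by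
  rw [substSeq_eq_block (ne_nil_of_head hp0) (ne_nil_of_head hp1) x le_rfl
    (blockLen_lt_succ (ne_nil_of_head hp0) (ne_nil_of_head hp1) x k)]
  simpa using blk_getD_zero hp0 hp1 (x k)

lemma substSeq_zero (x : ℕ → Bool) : substSeq p0 p1 x 0 = x 0 := by
  have := substSeq_blockStart hp0 hp1 x 0
  simpa [blockLen_zero] using this

lemma blockLen_one (x : ℕ → Bool) :
    blockLen p0 p1 x 1 = (if x 0 then p1 else p0).length := by
  rw [show (1 : ℕ) = 0 + 1 from rfl, blockLen_succ, blockLen_zero, Nat.zero_add]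

lemma substSeq_strictMono {u v : ℕ → Bool} (h : lexLt u v) :
    lexLt (substSeq p0 p1 u) (substSeq p0 p1 v) := by
  obtain ⟨m, agree, hlt⟩ := h
  rw [bool_lt_iff] at hlt
  have hL : blockLen p0 p1 u m = blockLen p0 p1 v m := blockLen_agree agree le_rfl
  refine ⟨blockLen p0 p1 u m, fun r hr => ?_, ?_⟩
  · exact substSeq_agree (ne_nil_of_head hp0) (ne_nil_of_head hp1) agree hr
  · rw [bool_lt_iff, substSeq_blockStart hp0 hp1 u m, hL, substSeq_blockStart hp0 hp1 v m]
    exact hlt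

lemma substSeq_mono {u v : ℕ → Bool} (h : lexLe u v) :
    lexLe (substSeq p0 p1 u) (substSeq p0 p1 v) := by
  rcases h with h | rfl
  · exact Or.inl (substSeq_strictMono hp0 hp1 h)
  · exact Or.inr rfl

lemma substSeq_const_shift (c : Bool) :
    shiftTail (substSeq p0 p1 (fun _ => c)) (if c then p1 else p0).length
      = substSeq p0 p1 (fun _ => c) := by
  have h := substSeq_shiftTail (ne_nil_of_head hp0) (ne_nil_of_head hp1) (fun _ => c) 1
  rw [blockLen_one hp0 hp1] at h
  exact h

lemma prefix_first_false {x : ℕ → Bool} (hx : x 0 = false) {r : ℕ} (hr : r < p0.length) :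
    substSeq p0 p1 x r = p0.getD r false := by
  have h := substSeq_head (ne_nil_of_head hp0) (ne_nil_of_head hp1) x (m := r)
    (by rw [hx]; simpa using hr)
  rw [hx] at h
  simpa using h

lemma prefix_first_true {x : ℕ → Bool} (hx : x 0 = true) {r : ℕ} (hr : r < p1.length) :
    substSeq p0 p1 x r = p1.getD r false := by
  have h := substSeq_head (ne_nil_of_head hp0) (ne_nil_of_head hp1) x (m := r)
    (by rw [hx]; simpa using hr)
  rw [hx] at h
  simpa using h

lemma substSeq_const_shift_false :
    shiftTail (substSeq p0 p1 (fun _ => false)) p0.length = substSeq p0 p1 (fun _ => false) := by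
  simpa using substSeq_const_shift hp0 hp1 false

lemma substSeq_const_shift_true :
    shiftTail (substSeq p0 p1 (fun _ => true)) p1.length = substSeq p0 p1 (fun _ => true) := by
  simpa using substSeq_const_shift hp0 hp1 true

end Mono

section Step

set_option linter.unusedSectionVars false

variable {p0 p1 : List Bool} (hp0 : p0.head? = some false) (hp1 : p1.head? = some true)
  {a b : ℕ → Bool} (ha : a 0 = false) (hb : b 0 = true)

-- abbreviations used through the proofs
local notation "Φ" => substSeq p0 p1
local notation "F0" => substSeq p0 p1 (fun _ => false)
local notation "F1" => substSeq p0 p1 (fun _ => true)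

include hp0 hp1 ha hb

lemma step_false {i : ℕ → Bool} (hi : i ∈ Omega (Φ a) (Φ b)) (n : ℕ)
    (h0 : lexLe F0 (shiftTail i n)) (ht : i n = false) :
    (∀ m, m < p0.length → i (n + m) = p0.getD m false) ∧
      lexLe F0 (shiftTail i (n + p0.length)) ∧ lexLe (shiftTail i (n + p0.length)) F1 := by
  have hF0 : ∀ r, r < p0.length → F0 r = p0.getD r false :=
    fun r hr => prefix_first_false hp0 hp1 rfl hr
  have hA : ∀ r, r < p0.length → Φ a r = p0.getD r false :=
    fun r hr => prefix_first_false hp0 hp1 ha hr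
  have ht0 : shiftTail i n 0 = false := by simpa [shiftTail] using ht
  have hB0 : Φ b 0 = true := by rw [substSeq_zero hp0 hp1]; exact hb
  have htB : lexLt (shiftTail i n) (Φ b) :=
    ⟨0, fun m hm => absurd hm (Nat.not_lt_zero m), by rw [bool_lt_iff]; exact ⟨ht0, hB0⟩⟩
  -- part A: the tail starts with the block p0
  have partA : ∀ m, m < p0.length → shiftTail i n m = p0.getD m false := by
    intro m
    induction m using Nat.strong_induction_on with
    | _ m IH =>
      intro hm
      by_contra hne
      cases htm : shiftTail i n m with
      | true =>
        have hgd : p0.getD m false = false := by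
          cases hgd : p0.getD m false
          · rfl
          · exact absurd (htm.trans hgd.symm) hne
        have hAt : lexLt (Φ a) (shiftTail i n) := by
          refine ⟨m, fun r hr => ?_, ?_⟩
          · rw [hA r (hr.trans hm), IH r hr (hr.trans hm)]
          · rw [bool_lt_iff, hA m hm, hgd, htm]; exact ⟨rfl, rfl⟩
        exact hi n ⟨hAt, htB⟩
      | false =>
        have hgd : p0.getD m false = true := by
          cases hgd : p0.getD m false
          · exact absurd (htm.trans hgd.symm) hne
          · rfl
        have : lexLt (shiftTail i n) F0 := by
          refine ⟨m, fun r hr => ?_, ?_⟩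
          · rw [hF0 r (hr.trans hm), IH r hr (hr.trans hm)]
          · rw [bool_lt_iff, hF0 m hm, hgd, htm]; exact ⟨rfl, rfl⟩
        exact not_lt_of_lexLe h0 this
  refine ⟨fun m hm => partA m hm, ?_, ?_⟩
  -- agreement of t with F0 (and with Φ a) on the first block
  · have agree : ∀ r, r < p0.length → F0 r = shiftTail i n r := by
      intro r hr; rw [hF0 r hr, partA r hr]
    have := (lexLe_shift_iff agree).1 h0
    rwa [substSeq_const_shift_false hp0 hp1, shiftTail_shiftTail] at this
  · by_contra hc
    have hgt : lexLt F1 (shiftTail i (n + p0.length)) := by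
      rcases lex_total (shiftTail i (n + p0.length)) F1 with h | h | h
      · exact absurd (Or.inl h) hc
      · exact absurd (Or.inr h) hc
      · exact h
    have agreeA : ∀ r, r < p0.length → Φ a r = shiftTail i n r := by
      intro r hr; rw [hA r hr, partA r hr]
    have hshiftA : shiftTail (Φ a) p0.length = Φ (shiftTail a 1) := by
      have h := substSeq_shiftTail (ne_nil_of_head hp0) (ne_nil_of_head hp1) a 1
      rwa [blockLen_one hp0 hp1, ha, if_neg (by simp)] at h
    have h1' : lexLe (Φ (shiftTail a 1)) F1 := substSeq_mono hp0 hp1 (lexLe_one _)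
    have : lexLt (shiftTail (Φ a) p0.length) (shiftTail (shiftTail i n) p0.length) := by
      rw [hshiftA, shiftTail_shiftTail]
      exact lexLe_trans_lt h1' hgt
    have hAt : lexLt (Φ a) (shiftTail i n) := (lexLt_shift_iff agreeA).2 this
    exact hi n ⟨hAt, htB⟩

lemma step_true {i : ℕ → Bool} (hi : i ∈ Omega (Φ a) (Φ b)) (n : ℕ)
    (h1 : lexLe (shiftTail i n) F1) (ht : i n = true) :
    (∀ m, m < p1.length → i (n + m) = p1.getD m false) ∧
      lexLe F0 (shiftTail i (n + p1.length)) ∧ lexLe (shiftTail i (n + p1.length)) F1 := by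
  have hF1 : ∀ r, r < p1.length → F1 r = p1.getD r false :=
    fun r hr => prefix_first_true hp0 hp1 rfl hr
  have hB : ∀ r, r < p1.length → Φ b r = p1.getD r false :=
    fun r hr => prefix_first_true hp0 hp1 hb hr
  have ht0 : shiftTail i n 0 = true := by simpa [shiftTail] using ht
  have hA0 : Φ a 0 = false := by rw [substSeq_zero hp0 hp1]; exact ha
  have htA : lexLt (Φ a) (shiftTail i n) :=
    ⟨0, fun m hm => absurd hm (Nat.not_lt_zero m), by rw [bool_lt_iff]; exact ⟨hA0, ht0⟩⟩
  have partA : ∀ m, m < p1.length → shiftTail i n m = p1.getD m false := by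
    intro m
    induction m using Nat.strong_induction_on with
    | _ m IH =>
      intro hm
      by_contra hne
      cases htm : shiftTail i n m with
      | false =>
        have hgd : p1.getD m false = true := by
          cases hgd : p1.getD m false
          · exact absurd (htm.trans hgd.symm) hne
          · rfl
        have hBt : lexLt (shiftTail i n) (Φ b) := by
          refine ⟨m, fun r hr => ?_, ?_⟩
          · rw [hB r (hr.trans hm), IH r hr (hr.trans hm)]
          · rw [bool_lt_iff, hB m hm, hgd, htm]; exact ⟨rfl, rfl⟩
        exact hi n ⟨htA, hBt⟩
      | true =>
        have hgd : p1.getD m false = false := by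
          cases hgd : p1.getD m false
          · rfl
          · exact absurd (htm.trans hgd.symm) hne
        have : lexLt F1 (shiftTail i n) := by
          refine ⟨m, fun r hr => ?_, ?_⟩
          · rw [hF1 r (hr.trans hm), IH r hr (hr.trans hm)]
          · rw [bool_lt_iff, hF1 m hm, hgd, htm]; exact ⟨rfl, rfl⟩
        exact not_lt_of_lexLe h1 this
  refine ⟨fun m hm => partA m hm, ?_, ?_⟩
  · by_contra hc
    have hgt : lexLt (shiftTail i (n + p1.length)) F0 := by
      rcases lex_total F0 (shiftTail i (n + p1.length)) with h | h | h
      · exact absurd (Or.inl h) hc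
      · exact absurd (Or.inr h) hc
      · exact h
    have agreeB : ∀ r, r < p1.length → shiftTail i n r = Φ b r := by
      intro r hr; rw [hB r hr, partA r hr]
    have hshiftB : shiftTail (Φ b) p1.length = Φ (shiftTail b 1) := by
      have h := substSeq_shiftTail (ne_nil_of_head hp0) (ne_nil_of_head hp1) b 1
      rwa [blockLen_one hp0 hp1, hb, if_pos rfl] at h
    have h0' : lexLe F0 (Φ (shiftTail b 1)) := substSeq_mono hp0 hp1 (lexLe_zero _)
    have : lexLt (shiftTail (shiftTail i n) p1.length) (shiftTail (Φ b) p1.length) := by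
      rw [hshiftB, shiftTail_shiftTail]
      exact lexLt_trans_le hgt h0'
    have hBt : lexLt (shiftTail i n) (Φ b) := (lexLt_shift_iff agreeB).2 this
    exact hi n ⟨htA, hBt⟩
  · have agree : ∀ r, r < p1.length → shiftTail i n r = F1 r := by
      intro r hr; rw [hF1 r hr, partA r hr]
    have := (lexLe_shift_iff agree).1 h1
    rwa [substSeq_const_shift_true hp0 hp1, shiftTail_shiftTail] at this

end Step

section Construction

set_option linter.unusedSectionVars false

variable {p0 p1 : List Bool} (hp0 : p0.head? = some false) (hp1 : p1.head? = some true)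
  {a b : ℕ → Bool} (ha : a 0 = false) (hb : b 0 = true)

local notation "Φ" => substSeq p0 p1
local notation "F0" => substSeq p0 p1 (fun _ => false)
local notation "F1" => substSeq p0 p1 (fun _ => true)

include hp0 hp1 ha hb

lemma tail_in_image {i : ℕ → Bool} (hi : i ∈ Omega (Φ a) (Φ b)) (n0 : ℕ)
    (h0 : lexLe F0 (shiftTail i n0)) (h1 : lexLe (shiftTail i n0) F1) :
    shiftTail i n0 ∈ Φ '' Omega a b := by
  classical
  have hne0 : p0 ≠ [] := ne_nil_of_head hp0
  have hne1 : p1 ≠ [] := ne_nil_of_head hp1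
  -- the sequence of block starting positions
  let N : ℕ → ℕ := fun k => Nat.rec n0 (fun _ m => m + (if i m then p1 else p0).length) k
  have hN0 : N 0 = n0 := rfl
  have hNsucc : ∀ k, N (k + 1) = N k + (if i (N k) then p1 else p0).length := fun k => rfl
  -- the preimage sequence
  set x : ℕ → Bool := fun k => i (N k) with hx
  -- invariant
  have inv : ∀ k, lexLe F0 (shiftTail i (N k)) ∧ lexLe (shiftTail i (N k)) F1 := by
    intro k
    induction k with
    | zero => exact ⟨h0, h1⟩
    | succ k ih =>
      rw [hNsucc k]
      cases hik : i (N k) with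
      | false =>
        obtain ⟨-, g0, g1⟩ := step_false hp0 hp1 ha hb hi (N k) ih.1 hik
        rw [hik] at *
        exact ⟨by simpa using g0, by simpa using g1⟩
      | true =>
        obtain ⟨-, g0, g1⟩ := step_true hp0 hp1 ha hb hi (N k) ih.2 hik
        rw [hik] at *
        exact ⟨by simpa using g0, by simpa using g1⟩
  -- block content
  have blockContent : ∀ k, ∀ m, m < (if x k then p1 else p0).length →
      i (N k + m) = (if x k then p1 else p0).getD m false := by
    intro k m
    cases hik : x k with
    | false =>
      show m < p0.length → i (N k + m) = p0.getD m false
      exact fun hm =>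
        (step_false hp0 hp1 ha hb hi (N k) (inv k).1 (show i (N k) = false from hik)).1 m hm
    | true =>
      show m < p1.length → i (N k + m) = p1.getD m false
      exact fun hm =>
        (step_true hp0 hp1 ha hb hi (N k) (inv k).2 (show i (N k) = true from hik)).1 m hm
  -- N in terms of blockLen
  have hNblock : ∀ k, N k = n0 + blockLen p0 p1 x k := by
    intro k
    induction k with
    | zero => simp [hN0, blockLen_zero]
    | succ k ih =>
      have e : (if i (N k) then p1 else p0) = (if x k then p1 else p0) := rfl
      rw [hNsucc k, e, ih, blockLen_succ]
      ring
  -- the substituted sequence equals the tail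
  have hsub : Φ x = shiftTail i n0 := by
    funext m
    obtain ⟨k, hk1, hk2⟩ := exists_block hne0 hne1 x m
    rw [substSeq_eq_block hne0 hne1 x hk1 hk2]
    have hoff : m - blockLen p0 p1 x k < (if x k then p1 else p0).length := by
      rw [blockLen_succ] at hk2; omega
    rw [← blockContent k _ hoff, hNblock k]
    show i (n0 + blockLen p0 p1 x k + (m - blockLen p0 p1 x k)) = shiftTail i n0 m
    have : n0 + blockLen p0 p1 x k + (m - blockLen p0 p1 x k) = n0 + m := by omega
    rw [this]; rfl
  -- x belongs to Omega a b
  have hxΩ : x ∈ Omega a b := by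
    intro k ⟨g1, g2⟩
    have e : Φ (shiftTail x k) = shiftTail i (N k) := by
      rw [← substSeq_shiftTail hne0 hne1 x k, hsub, shiftTail_shiftTail, ← hNblock k]
    refine hi (N k) ⟨?_, ?_⟩
    · rw [← e]; exact substSeq_strictMono hp0 hp1 g1
    · rw [← e]; exact substSeq_strictMono hp0 hp1 g2
  exact ⟨x, hxΩ, hsub⟩

lemma omega_decomp {i : ℕ → Bool} (hi : i ∈ Omega (Φ a) (Φ b)) :
    i ∈ Omega F0 F1 ∨ ∃ n, shiftTail i n ∈ Φ '' Omega a b := by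
  by_cases h : i ∈ Omega F0 F1
  · exact Or.inl h
  · right
    simp only [Omega, Set.mem_setOf_eq, not_forall, not_not] at h
    obtain ⟨n, g0, g1⟩ := h
    exact ⟨n, tail_in_image hp0 hp1 ha hb hi n (Or.inl g0) (Or.inl g1)⟩

lemma omega_mono_sub : Omega F0 F1 ⊆ Omega (Φ a) (Φ b) := by
  intro i hi n ⟨g1, g2⟩
  refine hi n ⟨?_, ?_⟩
  · exact lexLe_trans_lt (substSeq_mono hp0 hp1 (lexLe_zero a)) g1
  · exact lexLt_trans_le g2 (substSeq_mono hp0 hp1 (lexLe_one b))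

end Construction

section PiE

variable {q0 q1 : ℝ} (hq0 : 1 < q0) (hq1 : 1 < q1)

/-- the general term of the series defining `piE`. -/
noncomputable def pterm (q0 q1 : ℝ) (i : ℕ → Bool) (k : ℕ) : ℝ :=
  (if i k then (1 : ℝ) else 0) / ∏ j ∈ Finset.range (k + 1), qb q0 q1 (i j)

lemma piE_eq_tsum (q0 q1 : ℝ) (i : ℕ → Bool) : piE q0 q1 i = ∑' k, pterm q0 q1 i k := rfl

include hq0 hq1

lemma one_lt_qmin : 1 < min q0 q1 := lt_min hq0 hq1

lemma qb_ge (d : Bool) : min q0 q1 ≤ qb q0 q1 d := by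
  cases d <;> simp [qb, min_le_left, min_le_right]

lemma qb_pos (d : Bool) : 0 < qb q0 q1 d :=
  lt_of_lt_of_le (by linarith [one_lt_qmin hq0 hq1]) (qb_ge hq0 hq1 d)

lemma prod_qb_pos (i : ℕ → Bool) (n : ℕ) : 0 < ∏ j ∈ Finset.range n, qb q0 q1 (i j) :=
  Finset.prod_pos fun j _ => qb_pos hq0 hq1 (i j)

lemma prod_qb_ge (i : ℕ → Bool) (n : ℕ) :
    (min q0 q1) ^ n ≤ ∏ j ∈ Finset.range n, qb q0 q1 (i j) := by
  calc (min q0 q1) ^ n = ∏ _j ∈ Finset.range n, min q0 q1 := by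
        rw [Finset.prod_const, Finset.card_range]
  _ ≤ _ := Finset.prod_le_prod (fun j _ => by linarith [one_lt_qmin hq0 hq1])
      (fun j _ => qb_ge hq0 hq1 (i j))

lemma pterm_nonneg (i : ℕ → Bool) (k : ℕ) : 0 ≤ pterm q0 q1 i k := by
  unfold pterm
  apply div_nonneg
  · split <;> norm_num
  · exact (prod_qb_pos hq0 hq1 i (k + 1)).le

lemma pterm_le (i : ℕ → Bool) (k : ℕ) : pterm q0 q1 i k ≤ (min q0 q1)⁻¹ ^ (k + 1) := by
  have hq : (0:ℝ) < min q0 q1 := by linarith [one_lt_qmin hq0 hq1]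
  unfold pterm
  have h1 : (if i k then (1:ℝ) else 0) / ∏ j ∈ Finset.range (k + 1), qb q0 q1 (i j)
      ≤ 1 / (min q0 q1) ^ (k + 1) := by
    refine div_le_div₀ zero_le_one ?_ (pow_pos hq (k + 1)) (prod_qb_ge hq0 hq1 i (k + 1))
    split <;> norm_num
  calc (if i k then (1:ℝ) else 0) / ∏ j ∈ Finset.range (k + 1), qb q0 q1 (i j)
      ≤ 1 / (min q0 q1) ^ (k + 1) := h1
  _ = (min q0 q1)⁻¹ ^ (k + 1) := by rw [one_div, inv_pow]

lemma summable_pterm (i : ℕ → Bool) : Summable (pterm q0 q1 i) := by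
  have hq : (0:ℝ) < min q0 q1 := by linarith [one_lt_qmin hq0 hq1]
  have hr : (min q0 q1)⁻¹ < 1 := inv_lt_one_of_one_lt₀ (one_lt_qmin hq0 hq1)
  have hr0 : (0:ℝ) ≤ (min q0 q1)⁻¹ := inv_nonneg.2 hq.le
  refine Summable.of_nonneg_of_le (pterm_nonneg hq0 hq1 i) (pterm_le hq0 hq1 i) ?_
  have := (summable_geometric_of_lt_one hr0 hr).mul_left (min q0 q1)⁻¹
  refine this.congr fun k => ?_
  rw [pow_succ, mul_comm, mul_comm ((min q0 q1)⁻¹ ^ k)]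

lemma piE_nonneg (i : ℕ → Bool) : 0 ≤ piE q0 q1 i :=
  tsum_nonneg (pterm_nonneg hq0 hq1 i)

lemma piE_le (i : ℕ → Bool) : piE q0 q1 i ≤ (min q0 q1 - 1)⁻¹ := by
  have hq : (1:ℝ) < min q0 q1 := one_lt_qmin hq0 hq1
  have hr : (min q0 q1)⁻¹ < 1 := inv_lt_one_of_one_lt₀ hq
  have hr0 : (0:ℝ) ≤ (min q0 q1)⁻¹ := inv_nonneg.2 (by linarith)
  have hgeom : Summable (fun k : ℕ => (min q0 q1)⁻¹ ^ (k + 1)) := by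
    have := (summable_geometric_of_lt_one hr0 hr).mul_left (min q0 q1)⁻¹
    refine this.congr fun k => ?_
    rw [pow_succ, mul_comm, mul_comm ((min q0 q1)⁻¹ ^ k)]
  have h1 : piE q0 q1 i ≤ ∑' k : ℕ, (min q0 q1)⁻¹ ^ (k + 1) :=
    Summable.tsum_le_tsum (pterm_le hq0 hq1 i) (summable_pterm hq0 hq1 i) hgeom
  have h2 : ∑' k : ℕ, (min q0 q1)⁻¹ ^ (k + 1) = (min q0 q1 - 1)⁻¹ := by
    have e : ∀ k : ℕ, (min q0 q1)⁻¹ ^ (k + 1) = (min q0 q1)⁻¹ * ((min q0 q1)⁻¹) ^ k :=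
      fun k => by rw [pow_succ, mul_comm]
    rw [tsum_congr e, tsum_mul_left, tsum_geometric_of_lt_one hr0 hr, ← mul_inv]
    congr 1
    have h0 : min q0 q1 ≠ 0 := by linarith
    field_simp
  linarith

end PiE

section Split

variable {q0 q1 : ℝ} (hq0 : 1 < q0) (hq1 : 1 < q1)

noncomputable def cseg (q0 q1 : ℝ) (i : ℕ → Bool) (n : ℕ) : ℝ :=
  ∑ k ∈ Finset.range n, pterm q0 q1 i k

noncomputable def rseg (q0 q1 : ℝ) (i : ℕ → Bool) (n : ℕ) : ℝ :=
  (∏ j ∈ Finset.range n, qb q0 q1 (i j))⁻¹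

include hq0 hq1

lemma pterm_add (i : ℕ → Bool) (n k : ℕ) :
    pterm q0 q1 i (n + k) =
      (∏ j ∈ Finset.range n, qb q0 q1 (i j))⁻¹ * pterm q0 q1 (shiftTail i n) k := by
  unfold pterm
  rw [show n + k + 1 = n + (k + 1) by omega, Finset.prod_range_add]
  have hs : shiftTail i n k = i (n + k) := rfl
  have hQ : ∏ j ∈ Finset.range (k + 1), qb q0 q1 (shiftTail i n j)
      = ∏ j ∈ Finset.range (k + 1), qb q0 q1 (i (n + j)) := rfl
  rw [hs, hQ]
  have hP : (∏ j ∈ Finset.range n, qb q0 q1 (i j)) ≠ 0 := (prod_qb_pos hq0 hq1 i n).ne'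
  have hQ' : (∏ j ∈ Finset.range (k + 1), qb q0 q1 (i (n + j))) ≠ 0 :=
    (Finset.prod_pos fun j _ => qb_pos hq0 hq1 (i (n + j))).ne'
  field_simp

lemma piE_split (i : ℕ → Bool) (n : ℕ) :
    piE q0 q1 i = cseg q0 q1 i n + rseg q0 q1 i n * piE q0 q1 (shiftTail i n) := by
  rw [piE_eq_tsum, ← Summable.sum_add_tsum_nat_add n (summable_pterm hq0 hq1 i)]
  congr 1
  rw [piE_eq_tsum, rseg, ← tsum_mul_left]
  exact tsum_congr fun k => by rw [← pterm_add hq0 hq1 i n k, Nat.add_comm k n]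

omit hq0 hq1

lemma cseg_agree {i i' : ℕ → Bool} {n : ℕ} (h : ∀ m, m < n → i m = i' m) :
    cseg q0 q1 i n = cseg q0 q1 i' n := by
  refine Finset.sum_congr rfl fun k hk => ?_
  have hk' := Finset.mem_range.1 hk
  unfold pterm
  rw [h k hk']
  congr 1
  exact Finset.prod_congr rfl fun j hj =>
    by rw [h j (lt_of_lt_of_le (Finset.mem_range.1 hj) hk')]

lemma rseg_agree {i i' : ℕ → Bool} {n : ℕ} (h : ∀ m, m < n → i m = i' m) :
    rseg q0 q1 i n = rseg q0 q1 i' n := by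
  unfold rseg
  congr 1
  exact Finset.prod_congr rfl fun j hj => by rw [h j (Finset.mem_range.1 hj)]

include hq0 hq1

lemma rseg_pos (i : ℕ → Bool) (n : ℕ) : 0 < rseg q0 q1 i n :=
  inv_pos.2 (prod_qb_pos hq0 hq1 i n)

lemma rseg_le (i : ℕ → Bool) (n : ℕ) : rseg q0 q1 i n ≤ (min q0 q1)⁻¹ ^ n := by
  have hq : (0:ℝ) < min q0 q1 := by linarith [one_lt_qmin hq0 hq1]
  rw [inv_pow]
  exact inv_anti₀ (pow_pos hq n) (prod_qb_ge hq0 hq1 i n)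

end Split

section Part2

set_option linter.unusedSectionVars false

lemma dimH_affine_image_le (c r : ℝ) (s : Set ℝ) :
    dimH ((fun y => c + r * y) '' s) ≤ dimH s := by
  have hl : LipschitzWith (Real.nnabs r) fun y => c + r * y := by
    refine LipschitzWith.of_dist_le_mul fun x y => ?_
    rw [Real.dist_eq, Real.dist_eq]
    have he : c + r * x - (c + r * y) = r * (x - y) := by ring
    rw [he, abs_mul, Real.coe_nnabs]
  exact hl.dimH_image_le s

/-- extension of a finite word to a sequence, by `false`. -/
def extW (n : ℕ) (w : Fin n → Bool) : ℕ → Bool := fun m => if h : m < n then w ⟨m, h⟩ else false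

variable {p0 p1 : List Bool} (hp0 : p0.head? = some false) (hp1 : p1.head? = some true)
  {a b : ℕ → Bool} (ha : a 0 = false) (hb : b 0 = true)
  {q0 q1 : ℝ} (hq0 : 1 < q0) (hq1 : 1 < q1)

local notation "Φ" => substSeq p0 p1
local notation "F0" => substSeq p0 p1 (fun _ => false)
local notation "F1" => substSeq p0 p1 (fun _ => true)

include hp0 hp1 ha hb hq0 hq1

lemma image_subset_decomp :
    piE q0 q1 '' Omega (Φ a) (Φ b) ⊆
      (piE q0 q1 '' Omega F0 F1) ∪
      ⋃ (n : ℕ), ⋃ (w : Fin n → Bool),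
        (fun y => cseg q0 q1 (extW n w) n + rseg q0 q1 (extW n w) n * y) ''
          (piE q0 q1 '' (Φ '' Omega a b)) := by
  rintro - ⟨i, hi, rfl⟩
  rcases omega_decomp hp0 hp1 ha hb hi with h | ⟨n, hmem⟩
  · exact Or.inl ⟨i, h, rfl⟩
  · right
    refine Set.mem_iUnion.2 ⟨n, Set.mem_iUnion.2 ⟨fun k => i k.1, ?_⟩⟩
    have hagree : ∀ m, m < n → i m = extW n (fun k : Fin n => i k.1) m := by
      intro m hm; simp [extW, hm]
    refine ⟨piE q0 q1 (shiftTail i n), ⟨shiftTail i n, hmem, rfl⟩, ?_⟩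
    rw [← cseg_agree hagree, ← rseg_agree hagree]
    exact (piE_split hq0 hq1 i n).symm

lemma part2_lemma :
    dimH (piE q0 q1 '' Omega (Φ a) (Φ b)) ≤
      dimH (piE q0 q1 '' Omega F0 F1) + dimH (piE q0 q1 '' (Φ '' Omega a b)) := by
  refine le_trans (dimH_mono (image_subset_decomp hp0 hp1 ha hb hq0 hq1)) ?_
  rw [dimH_union]
  refine max_le le_self_add ?_
  refine le_trans ?_ le_add_self
  rw [dimH_iUnion]
  refine iSup_le fun n => ?_
  rw [dimH_iUnion]
  exact iSup_le fun w => dimH_affine_image_le _ _ _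

lemma part1_lemma :
    dimH (piE q0 q1 '' Omega F0 F1) ≤ dimH (piE q0 q1 '' Omega (Φ a) (Φ b)) :=
  dimH_mono (Set.image_mono (omega_mono_sub hp0 hp1 ha hb))

end Part2

section Part3

set_option linter.unusedSectionVars false
set_option maxHeartbeats 1000000

open MeasureTheory
open scoped ENNReal NNReal

noncomputable def prefF (S : Set (ℕ → Bool)) (n : ℕ) : Finset (Fin n → Bool) :=
  Set.Finite.toFinset
    (Set.toFinite {w : Fin n → Bool | ∃ i ∈ S, ∀ k : Fin n, i k.1 = w k})

lemma Lwords_eq_prefF (a b : ℕ → Bool) (n : ℕ) : Lwords a b n = prefF (Omega a b) n := rfl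

lemma mem_prefF {S : Set (ℕ → Bool)} {n : ℕ} {w : Fin n → Bool} :
    w ∈ prefF S n ↔ ∃ i ∈ S, ∀ k : Fin n, i k.1 = w k := by
  simp [prefF]

variable {p0 p1 : List Bool} (hp0 : p0.head? = some false) (hp1 : p1.head? = some true)
  {a b : ℕ → Bool} (ha : a 0 = false) (hb : b 0 = true)
  {q0 q1 : ℝ} (hq0 : 1 < q0) (hq1 : 1 < q1)

local notation "Φ" => substSeq p0 p1

lemma zero_mem_Omega : (fun _ => false) ∈ Omega a b := by
  intro n ⟨g1, g2⟩
  obtain ⟨m, -, hlt⟩ := g1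
  rw [bool_lt_iff] at hlt
  exact absurd hlt.2 (by simp [shiftTail])

lemma card_Lwords_pos (n : ℕ) : 0 < (Lwords a b n).card := by
  refine Finset.card_pos.2 ⟨fun _ => false, ?_⟩
  rw [Lwords_eq_prefF, mem_prefF]
  exact ⟨fun _ => false, zero_mem_Omega, fun k => rfl⟩

lemma card_Lwords_le (n : ℕ) : (Lwords a b n).card ≤ 2 ^ n := by
  calc (Lwords a b n).card ≤ Fintype.card (Fin n → Bool) := Finset.card_le_univ _
  _ = 2 ^ n := by simp

include hp0 hp1 in
lemma card_prefF_le (n : ℕ) :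
    (prefF (Φ '' Omega a b) n).card ≤ (Lwords a b n).card := by
  classical
  have hne0 : p0 ≠ [] := ne_nil_of_head hp0
  have hne1 : p1 ≠ [] := ne_nil_of_head hp1
  set G : (Fin n → Bool) → (Fin n → Bool) := fun w k => Φ (extW n w) k.1 with hG
  have hsub : prefF (Φ '' Omega a b) n ⊆ (Lwords a b n).image G := by
    intro w hw
    rw [mem_prefF] at hw
    obtain ⟨j, ⟨x, hx, rfl⟩, hjw⟩ := hw
    refine Finset.mem_image.2 ⟨fun k => x k.1, ?_, ?_⟩
    · rw [Lwords_eq_prefF, mem_prefF]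
      exact ⟨x, hx, fun k => rfl⟩
    · funext k
      rw [hG]
      have hagree : ∀ m, m < n → extW n (fun k : Fin n => x k.1) m = x m := by
        intro m hm; simp [extW, hm]
      have hkblock : (k : ℕ) < blockLen p0 p1 (extW n (fun k : Fin n => x k.1)) n := by
        calc (k : ℕ) < n := k.2
        _ ≤ blockLen p0 p1 (extW n (fun k : Fin n => x k.1)) n := le_blockLen hne0 hne1 _ n
      calc Φ (extW n (fun k : Fin n => x k.1)) k.1
          = Φ x k.1 := substSeq_agree hne0 hne1 hagree hkblock
      _ = w k := hjw k
  calc (prefF (Φ '' Omega a b) n).card ≤ ((Lwords a b n).image G).card :=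
        Finset.card_le_card hsub
  _ ≤ (Lwords a b n).card := Finset.card_image_le

lemma card_event (hent : entropy a b = 0) {ε : ℝ} (hε : 0 < ε) :
    ∀ᶠ n : ℕ in atTop, ((Lwords a b n).card : ℝ) ≤ Real.exp (ε * n) := by
  have hbdd : IsBoundedUnder (· ≤ ·) atTop
      (fun n : ℕ => Real.log ((Lwords a b n).card) / n) := by
    refine isBoundedUnder_of ⟨Real.log 2, fun n => ?_⟩
    rcases Nat.eq_zero_or_pos n with rfl | hn
    · simp [Real.log_nonneg one_le_two]
    · have hcard : (0:ℝ) < ((Lwords a b n).card : ℝ) := by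
        exact_mod_cast card_Lwords_pos (a := a) (b := b) n
      have hle : ((Lwords a b n).card : ℝ) ≤ (2 : ℝ) ^ n := by
        exact_mod_cast card_Lwords_le (a := a) (b := b) n
      have hlog : Real.log ((Lwords a b n).card) ≤ (n : ℝ) * Real.log 2 := by
        calc Real.log ((Lwords a b n).card) ≤ Real.log ((2:ℝ) ^ n) :=
              Real.log_le_log hcard hle
        _ = (n : ℝ) * Real.log 2 := by rw [Real.log_pow]
      rw [div_le_iff₀ (by exact_mod_cast hn)]
      linarith [hlog]
  have h1 : ∀ᶠ n : ℕ in atTop, Real.log ((Lwords a b n).card) / n < ε := by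
    refine eventually_lt_of_limsup_lt ?_ hbdd
    rw [show Filter.limsup (fun n : ℕ => Real.log ((Lwords a b n).card) / n) Filter.atTop
        = entropy a b from rfl, hent]
    exact hε
  filter_upwards [h1, eventually_ge_atTop 1] with n hn hn1
  have hcard : (0:ℝ) < ((Lwords a b n).card : ℝ) := by
    exact_mod_cast card_Lwords_pos (a := a) (b := b) n
  have hnpos : (0:ℝ) < (n : ℝ) := by exact_mod_cast hn1
  rw [div_lt_iff₀ hnpos] at hn
  calc ((Lwords a b n).card : ℝ) = Real.exp (Real.log ((Lwords a b n).card)) :=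
        (Real.exp_log hcard).symm
  _ ≤ Real.exp (ε * n) := Real.exp_le_exp.2 (by linarith [hn])

include hp0 hp1 ha hb hq0 hq1 in
lemma measure_C_zero (hent : entropy a b = 0) (σ : ℝ≥0) (hσ : 0 < σ) :
    μH[(σ:ℝ)] (piE q0 q1 '' (Φ '' Omega a b)) = 0 := by
  classical
  set qm : ℝ := min q0 q1 with hqm_def
  have hqm : 1 < qm := one_lt_qmin hq0 hq1
  have hqm0 : (0:ℝ) < qm := by linarith
  set c : ℝ := qm⁻¹ with hc_def
  have hc0 : 0 < c := inv_pos.2 hqm0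
  have hc1 : c < 1 := inv_lt_one_of_one_lt₀ hqm
  set M : ℝ := (qm - 1)⁻¹ with hM_def
  have hM0 : 0 < M := inv_pos.2 (by linarith)
  set S : Set ℝ := piE q0 q1 '' (Φ '' Omega a b) with hS_def
  set ι : ℕ → Type := fun n => {w : Fin n → Bool // w ∈ prefF (Φ '' Omega a b) n} with hι
  set t : ∀ n : ℕ, ι n → Set ℝ := fun n w =>
    Set.Icc (cseg q0 q1 (extW n w.1) n) (cseg q0 q1 (extW n w.1) n + c ^ n * M) with ht_def
  set r : ℕ → ℝ≥0∞ := fun n => ENNReal.ofReal (c ^ n * M) with hr_def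
  have hr : Tendsto r atTop (𝓝 0) := by
    rw [show (0:ℝ≥0∞) = ENNReal.ofReal 0 by simp]
    apply ENNReal.tendsto_ofReal
    have := (tendsto_pow_atTop_nhds_zero_of_lt_one hc0.le hc1).mul_const M
    simpa using this
  have hdiam : ∀ n (w : ι n), EMetric.diam (t n w) = r n := by
    intro n w
    rw [ht_def, hr_def]
    simp only [EMetric.diam, Real.ediam_Icc, add_sub_cancel_left]
  have ht : ∀ᶠ n in atTop, ∀ w : ι n, EMetric.diam (t n w) ≤ r n :=
    Filter.Eventually.of_forall fun n w => (hdiam n w).le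
  have hst : ∀ᶠ n in atTop, S ⊆ ⋃ w : ι n, t n w := by
    refine Filter.Eventually.of_forall fun n => ?_
    rintro - ⟨j, hj, rfl⟩
    have hw : (fun k : Fin n => j k.1) ∈ prefF (Φ '' Omega a b) n :=
      mem_prefF.2 ⟨j, hj, fun k => rfl⟩
    refine Set.mem_iUnion.2 ⟨⟨fun k : Fin n => j k.1, hw⟩, ?_⟩
    have hagree : ∀ m, m < n → j m = extW n (fun k : Fin n => j k.1) m := by
      intro m hm; simp [extW, hm]
    have hsplit := piE_split hq0 hq1 j n
    rw [cseg_agree hagree] at hsplit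
    constructor
    · rw [hsplit]
      have : 0 ≤ rseg q0 q1 j n * piE q0 q1 (shiftTail j n) :=
        mul_nonneg (rseg_pos hq0 hq1 j n).le (piE_nonneg hq0 hq1 _)
      linarith
    · rw [hsplit]
      have h1 : rseg q0 q1 j n * piE q0 q1 (shiftTail j n) ≤ c ^ n * M := by
        refine mul_le_mul ?_ (piE_le hq0 hq1 _) (piE_nonneg hq0 hq1 _) (by positivity)
        exact rseg_le hq0 hq1 j n
      linarith
  have hmain := MeasureTheory.Measure.hausdorffMeasure_le_liminf_sum (σ:ℝ) S r hr t ht hst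
  -- compute the sums
  have hsum : ∀ n : ℕ, (∑ w : ι n, EMetric.diam (t n w) ^ (σ:ℝ))
      = ENNReal.ofReal (((prefF (Φ '' Omega a b) n).card : ℝ) * (c ^ n * M) ^ (σ:ℝ)) := by
    intro n
    have : ∀ w : ι n, EMetric.diam (t n w) ^ (σ:ℝ)
        = ENNReal.ofReal ((c ^ n * M) ^ (σ:ℝ)) := by
      intro w
      rw [hdiam n w, hr_def]
      exact ENNReal.ofReal_rpow_of_nonneg (by positivity) σ.2
    rw [Finset.sum_congr rfl fun w _ => this w, Finset.sum_const, Finset.card_univ,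
      Fintype.card_coe, nsmul_eq_mul, ENNReal.ofReal_mul (by positivity)]
    congr 1
    simp [ENNReal.ofReal_natCast]
  -- the real sequence tends to zero
  have hreal : Tendsto
      (fun n : ℕ => ((prefF (Φ '' Omega a b) n).card : ℝ) * (c ^ n * M) ^ (σ:ℝ))
      atTop (𝓝 0) := by
    set γ : ℝ := c ^ (σ:ℝ) with hγ_def
    have hγ0 : 0 < γ := Real.rpow_pos_of_pos hc0 _
    set ε : ℝ := (σ:ℝ) / 2 * Real.log qm with hε_def
    have hσ0 : (0:ℝ) < (σ:ℝ) := by exact_mod_cast hσ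
    have hε0 : 0 < ε := by
      have := Real.log_pos hqm
      positivity
    set ρ : ℝ := Real.exp ε * γ with hρ_def
    have hρ0 : 0 ≤ ρ := by positivity
    have hρ1 : ρ < 1 := by
      have e1 : Real.exp ε = qm ^ ((σ:ℝ) / 2) := by
        rw [Real.rpow_def_of_pos hqm0, mul_comm]
      have e2 : γ = qm ^ (-(σ:ℝ)) := by
        rw [hγ_def, hc_def, Real.inv_rpow hqm0.le, ← Real.rpow_neg hqm0.le]
      rw [hρ_def, e1, e2, ← Real.rpow_add hqm0]
      refine Real.rpow_lt_one_of_one_lt_of_neg hqm (by linarith)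
    have hbound : ∀ᶠ n : ℕ in atTop,
        ((prefF (Φ '' Omega a b) n).card : ℝ) * (c ^ n * M) ^ (σ:ℝ)
          ≤ M ^ (σ:ℝ) * ρ ^ n := by
      filter_upwards [card_event (a := a) (b := b) hent hε0] with n hcard
      have hpref : ((prefF (Φ '' Omega a b) n).card : ℝ) ≤ Real.exp (ε * n) := by
        refine le_trans ?_ hcard
        exact_mod_cast card_prefF_le hp0 hp1 (a := a) (b := b) n
      have hcn : (c ^ n) ^ (σ:ℝ) = γ ^ n := by
        rw [hγ_def, ← Real.rpow_natCast c n, ← Real.rpow_mul hc0.le, mul_comm,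
          Real.rpow_mul hc0.le, Real.rpow_natCast]
      have hexp : Real.exp (ε * n) = Real.exp ε ^ n := by
        rw [mul_comm, Real.exp_nat_mul]
      have hsplit2 : (c ^ n * M) ^ (σ:ℝ) = γ ^ n * M ^ (σ:ℝ) := by
        rw [Real.mul_rpow (by positivity) hM0.le, hcn]
      rw [hsplit2]
      calc ((prefF (Φ '' Omega a b) n).card : ℝ) * (γ ^ n * M ^ (σ:ℝ))
          ≤ Real.exp (ε * n) * (γ ^ n * M ^ (σ:ℝ)) := by
            refine mul_le_mul_of_nonneg_right hpref (by positivity)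
      _ = M ^ (σ:ℝ) * ρ ^ n := by rw [hexp, hρ_def, mul_pow]; ring
    have hnonneg : ∀ n : ℕ,
        0 ≤ ((prefF (Φ '' Omega a b) n).card : ℝ) * (c ^ n * M) ^ (σ:ℝ) := by
      intro n; positivity
    refine squeeze_zero' (Filter.Eventually.of_forall hnonneg) hbound ?_
    have := (tendsto_pow_atTop_nhds_zero_of_lt_one hρ0 hρ1).const_mul (M ^ (σ:ℝ))
    simpa using this
  have htends : Tendsto (fun n : ℕ => ∑ w : ι n, EMetric.diam (t n w) ^ (σ:ℝ))
      atTop (𝓝 0) := by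
    rw [show (0:ℝ≥0∞) = ENNReal.ofReal 0 by simp]
    simp only [hsum]
    exact ENNReal.tendsto_ofReal hreal
  refine le_antisymm ?_ zero_le
  calc μH[(σ:ℝ)] S ≤ liminf (fun n : ℕ => ∑ w : ι n, EMetric.diam (t n w) ^ (σ:ℝ)) atTop :=
        hmain
  _ = 0 := htends.liminf_eq

include hp0 hp1 ha hb hq0 hq1 in
lemma dimH_C_zero (hent : entropy a b = 0) :
    dimH (piE q0 q1 '' (Φ '' Omega a b)) = 0 := by
  by_contra h
  have hpos : 0 < dimH (piE q0 q1 '' (Φ '' Omega a b)) := zero_lt_iff.2 h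
  obtain ⟨σ, hσ0, hσlt⟩ := ENNReal.lt_iff_exists_nnreal_btwn.1 hpos
  have hσpos : 0 < σ := by
    rcases eq_or_lt_of_le (zero_le : 0 ≤ σ) with h' | h'
    · exfalso; rw [← h'] at hσ0; simp at hσ0
    · exact h'
  have hle : dimH (piE q0 q1 '' (Φ '' Omega a b)) ≤ σ := by
    refine dimH_le_of_hausdorffMeasure_ne_top ?_
    rw [measure_C_zero hp0 hp1 ha hb hq0 hq1 hent σ hσpos]
    exact ENNReal.zero_ne_top
  exact absurd (lt_of_le_of_lt hle hσlt) (lt_irrefl _)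

end Part3

/-- Lemma 3.4: for a substitution `φ` with `φ(0) ∈ 0{0,1}^*`, `φ(1) ∈ 1{0,1}^*`, one has
`0 ≤ dim_H π_{q₀,q₁}(Ω_{φ(a),φ(b)}) − dim_H π_{q₀,q₁}(Ω_{φ(0^∞),φ(1^∞)})
≤ dim_H π_{q₀,q₁}(φ(Ω_{a,b}))`; in particular, if `h(Ω_{a,b}) = 0` then
`dim_H π_{q₀,q₁}(Ω_{φ(a),φ(b)}) = dim_H π_{q₀,q₁}(Ω_{φ(0^∞),φ(1^∞)})`. -/
theorem stmt18 (p0 p1 : List Bool) (hp0 : p0.head? = some false) (hp1 : p1.head? = some true)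
    (a b : ℕ → Bool) (ha : a 0 = false) (hb : b 0 = true)
    (q0 q1 : ℝ) (hq0 : 1 < q0) (hq1 : 1 < q1) :
    dimH (piE q0 q1 ''
        Omega (substSeq p0 p1 (fun _ => false)) (substSeq p0 p1 (fun _ => true))) ≤
      dimH (piE q0 q1 '' Omega (substSeq p0 p1 a) (substSeq p0 p1 b)) ∧
    dimH (piE q0 q1 '' Omega (substSeq p0 p1 a) (substSeq p0 p1 b)) ≤
      dimH (piE q0 q1 ''
        Omega (substSeq p0 p1 (fun _ => false)) (substSeq p0 p1 (fun _ => true))) +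
        dimH (piE q0 q1 '' (substSeq p0 p1 '' Omega a b)) ∧
    (entropy a b = 0 →
      dimH (piE q0 q1 '' Omega (substSeq p0 p1 a) (substSeq p0 p1 b)) =
        dimH (piE q0 q1 ''
          Omega (substSeq p0 p1 (fun _ => false)) (substSeq p0 p1 (fun _ => true)))) := by
  refine ⟨part1_lemma hp0 hp1 ha hb hq0 hq1, part2_lemma hp0 hp1 ha hb hq0 hq1, ?_⟩
  intro hent
  refine le_antisymm ?_ (part1_lemma hp0 hp1 ha hb hq0 hq1)
  have h2 := part2_lemma hp0 hp1 ha hb hq0 hq1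
  rw [dimH_C_zero hp0 hp1 ha hb hq0 hq1 hent, add_zero] at h2
  exact h2
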